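/- arXiv:1412.5849 — 2 statements merged into one kernel-verified Lean document; each statement's English description precedes it below -/
import Mathlib

section
/- Let p < q be distinct primes, n a positive integer with p^{n-1} ≥ q, and let G be a group of order p^n q such that (i) every Sylow p-subgroup of G is cyclic and G has a unique Sylow q-subgroup, and (ii) the intersection of all Sylow p-subgroups of G has order p^{n-1}. Then the rainbow connection number of the power graph Γ_G equals 2. -/
/-- The power graph of a group `G`: distinct elements `x` and `y` are adjacent
iff one is a power of the other. -/
def powerGraph (G : Type*) [Group G] : SimpleGraph G where
  Adj x y := x ≠ y ∧ (x ∈ Subgroup.zpowers y ∨ y ∈ Subgroup.zpowers x)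
  symm := ⟨fun x y h => ⟨h.1.symm, h.2.symm⟩⟩
  loopless := ⟨fun x h => h.1 rfl⟩

/-- `ζ` is a rainbow `k`-coloring of `Γ`: every pair of vertices is joined by a
path whose edges receive pairwise distinct colors. -/
def IsRainbowColoring {V : Type*} (Γ : SimpleGraph V) {k : ℕ} (ζ : Sym2 V → Fin k) : Prop :=
  ∀ u v : V, ∃ p : Γ.Walk u v, p.IsPath ∧ (p.edges.map ζ).Nodup

/-- The rainbow connection number of `Γ`: the least `k` admitting a rainbow
`k`-coloring. -/
noncomputable def rainbowConnection {V : Type*} (Γ : SimpleGraph V) : ℕ :=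
  sInf {k : ℕ | ∃ ζ : Sym2 V → Fin k, IsRainbowColoring Γ ζ}

/-- An element `x` is a maximal involution if it has order 2 and the only
cyclic subgroup containing `x` is `⟨x⟩`. -/
def IsMaximalInvolution {G : Type*} [Group G] (x : G) : Prop :=
  orderOf x = 2 ∧ ∀ g : G, x ∈ Subgroup.zpowers g → Subgroup.zpowers g = Subgroup.zpowers x

/-!
The identity is adjacent to every vertex. Let `N` be the intersection of the Sylow `p`-subgroups
and `S` the set of elements of order divisible by `q`. Both are cliques: `N` lies in a cyclic
Sylow subgroup, and since `G` is not cyclic, an element of `S` is a power of another one as soon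
as its order divides the other's, comparing `p`-parts inside `N` and `q`-parts inside the unique
Sylow `q`-subgroup. Every other element generates a Sylow `p`-subgroup, so it is adjacent to all
of `N`; as there are at most `q < |N|` Sylow `p`-subgroups, they can be labelled injectively by
nontrivial elements of `N`. Giving one colour to the edges from the identity to `S` and from each
remaining element to its label, and the other colour to all other edges, joins every
non-adjacent pair by a rainbow path of length two. Elements of order `p` and `q` are not
adjacent, so one colour does not suffice.
-/

open Subgroup

section Rainbow

variable {V : Type*} {Γ : SimpleGraph V}

theorem isRainbowColoring_of_exists_common_neighbor {k : ℕ} {ζ : Sym2 V → Fin k}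
    (h : ∀ u v, u ≠ v → ¬Γ.Adj u v → ∃ w, Γ.Adj u w ∧ Γ.Adj w v ∧ ζ s(u, w) ≠ ζ s(w, v)) :
    IsRainbowColoring Γ ζ := by
  intro u v
  by_cases huv : u = v
  · subst huv
    exact ⟨.nil, .nil, by simp⟩
  by_cases hadj : Γ.Adj u v
  · exact ⟨hadj.toWalk, by simp [SimpleGraph.Adj.toWalk, hadj.ne], by simp [SimpleGraph.Adj.toWalk]⟩
  obtain ⟨w, huw, hwv, hζ⟩ := h u v huv hadj
  refine ⟨.cons huw (.cons hwv .nil), ?_, by simpa using hζ⟩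
  simp [huw.ne, hwv.ne, huv]

theorem IsRainbowColoring.two_le {k : ℕ} {ζ : Sym2 V → Fin k} (hζ : IsRainbowColoring Γ ζ)
    {x y : V} (hxy : x ≠ y) (hadj : ¬Γ.Adj x y) : 2 ≤ k := by
  obtain ⟨w, -, hw⟩ := hζ x y
  have hlen : w.length ≤ k := by simpa using hw.length_le_card
  match w with
  | .nil => exact absurd rfl hxy
  | .cons h .nil => exact absurd h hadj
  | .cons _ (.cons _ _) =>
    simp only [SimpleGraph.Walk.length_cons] at hlen
    omega

theorem rainbowConnection_eq_two {ζ : Sym2 V → Fin 2} (hζ : IsRainbowColoring Γ ζ) {x y : V}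
    (hxy : x ≠ y) (hadj : ¬Γ.Adj x y) : rainbowConnection Γ = 2 :=
  le_antisymm (Nat.sInf_le ⟨ζ, hζ⟩) <|
    le_csInf ⟨2, ζ, hζ⟩ fun _ ⟨_, hζ'⟩ => hζ'.two_le hxy hadj

open scoped Classical in
noncomputable def hubColoring (o : V) (N S : Set V) (W : V → V) : Sym2 V → Fin 2 :=
  let marked x y := (x = o ∧ y ∈ S) ∨ (x ∉ N ∧ x ∉ S ∧ y = W x)
  Sym2.lift ⟨fun x y => if marked x y ∨ marked y x then 0 else 1, fun x y => by simp only [or_comm]⟩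

theorem isRainbowColoring_hubColoring {o : V} {N S : Set V} {W : V → V}
    (ho : ∀ v, v ≠ o → Γ.Adj o v) (hoN : o ∈ N) (hN : Γ.IsClique N) (hS : Γ.IsClique S)
    (hNS : Disjoint N S) (hNO : ∀ x ∈ N, ∀ v ∉ N, v ∉ S → Γ.Adj x v)
    (hWN : ∀ v, W v ∈ N) (hWo : ∀ v, W v ≠ o)
    (hW : ∀ u v, u ∉ N → u ∉ S → v ∉ N → v ∉ S → u ≠ v → ¬Γ.Adj u v → W u ≠ W v) :
    IsRainbowColoring Γ (hubColoring o N S W) := by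
  refine isRainbowColoring_of_exists_common_neighbor fun u v huv hadj => ?_
  have hoS : o ∉ S := hNS.notMem_of_mem_left hoN
  have huo : u ≠ o := by rintro rfl; exact hadj (ho v huv.symm)
  have hvo : v ≠ o := by rintro rfl; exact hadj (ho u huv).symm
  have hoW : ∀ v, o ≠ W v := fun v => (hWo v).symm
  by_cases hu : u ∈ S <;> by_cases hv : v ∈ S
  · exact absurd (hS hu hv huv) hadj
  · exact ⟨o, (ho u huo).symm, ho v hvo, by simp [hubColoring, hu, hv, huo, hvo, hoN, hoS, hoW]⟩
  · exact ⟨o, (ho u huo).symm, ho v hvo, by simp [hubColoring, hu, hv, huo, hvo, hoN, hoS, hoW]⟩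
  by_cases huN : u ∈ N <;> by_cases hvN : v ∈ N
  · exact absurd (hN huN hvN huv) hadj
  · exact absurd (hNO u huN v hvN hv) hadj
  · exact absurd (hNO v hvN u huN hu).symm hadj
  have hWS : W u ∉ S := hNS.notMem_of_mem_left (hWN u)
  refine ⟨W u, (hNO _ (hWN u) u huN hu).symm, hNO _ (hWN u) v hvN hv, ?_⟩
  simp [hubColoring, hu, hv, huN, hvN, hWN, hWS, hWo, hW u v huN hu hvN hv huv hadj]

end Rainbow

theorem nonempty_embedding_ne_of_natCard_lt {α β : Type*} [Finite α] [Finite β]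
    (h : Nat.card α < Nat.card β) (b : β) : Nonempty (α ↪ {y : β // y ≠ b}) := by
  classical
  have := Fintype.ofFinite α
  have := Fintype.ofFinite β
  exact Function.Embedding.nonempty_of_card_le <| by
    rw [Fintype.card_subtype_compl, Fintype.card_subtype_eq, ← Nat.card_eq_fintype_card,
      ← Nat.card_eq_fintype_card]
    omega

theorem Nat.factorization_pow_mul_prime {p q : ℕ} (hp : p.Prime) (hq : q.Prime) (hpq : p ≠ q)
    (n : ℕ) : (p ^ n * q).factorization p = n ∧ (p ^ n * q).factorization q = 1 := by
  simp [Nat.factorization_mul, hp.factorization_pow, hq.factorization, hp.ne_zero, hq.ne_zero,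
    hpq, hpq.symm]

theorem Nat.dvd_prime_pow_pred_of_ne {p n s : ℕ} (hp : p.Prime) (h : s ∣ p ^ n)
    (hne : s ≠ p ^ n) : s ∣ p ^ (n - 1) := by
  obtain ⟨i, hi, rfl⟩ := (Nat.dvd_prime_pow hp).mp h
  exact pow_dvd_pow p (by by_contra! h; exact hne (by rw [show i = n by omega]))

theorem Nat.dvd_or_dvd_of_dvd_prime_pow {p n s t : ℕ} (hp : p.Prime) (hs : s ∣ p ^ n)
    (ht : t ∣ p ^ n) : s ∣ t ∨ t ∣ s := by
  obtain ⟨i, -, rfl⟩ := (Nat.dvd_prime_pow hp).mp hs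
  obtain ⟨j, -, rfl⟩ := (Nat.dvd_prime_pow hp).mp ht
  exact (le_total i j).imp (pow_dvd_pow p) (pow_dvd_pow p)

theorem orderOf_pow_of_orderOf_eq_mul {G : Type*} [Group G] [Finite G] {x : G} {a b : ℕ}
    (h : orderOf x = a * b) : orderOf (x ^ a) = b := by
  have ha : a ≠ 0 := left_ne_zero_of_mul (h ▸ (orderOf_pos x).ne')
  rw [orderOf_pow_of_dvd ha (Dvd.intro b h.symm), h,
    Nat.mul_div_cancel_left b (Nat.pos_of_ne_zero ha)]

theorem mem_of_pow_mem_of_pow_mem {G : Type*} [Group G] {H : Subgroup G} {x : G} {m k : ℕ}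
    (hmk : m.Coprime k) (hm : x ^ m ∈ H) (hk : x ^ k ∈ H) : x ∈ H := by
  obtain ⟨a, b, hab⟩ := Nat.isCoprime_iff_coprime.mpr hmk
  have : x = (x ^ m) ^ a * (x ^ k) ^ b := by
    rw [← zpow_natCast, ← zpow_natCast, ← zpow_mul, ← zpow_mul, ← zpow_add, mul_comm (m : ℤ),
      mul_comm (k : ℤ), hab, zpow_one]
  rw [this]
  exact mul_mem (zpow_mem hm a) (zpow_mem hk b)

-- At most `|H|` elements satisfy `a ^ |H| = 1` in a cyclic group, and `H` already provides `|H|`.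
theorem IsCyclic.mem_of_orderOf_dvd_card {α : Type*} [Group α] [Finite α] [IsCyclic α]
    (H : Subgroup α) {x : α} (h : orderOf x ∣ Nat.card H) : x ∈ H := by
  classical
  have := Fintype.ofFinite α
  set T := Finset.univ.filter fun a : α => a ^ Nat.card H = 1
  have hsub : (H : Set α).toFinset ⊆ T := fun a ha => by
    rw [Set.mem_toFinset] at ha
    simpa [T] using orderOf_dvd_iff_pow_eq_one.mp (H.orderOf_dvd_natCard ha)
  have hle : T.card ≤ (H : Set α).toFinset.card := by
    rw [Set.toFinset_card, ← Nat.card_eq_fintype_card]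
    exact IsCyclic.card_pow_eq_one_le Nat.card_pos
  have hxT : x ∈ T := by simpa [T] using orderOf_dvd_iff_pow_eq_one.mp h
  rw [← Finset.eq_of_subset_of_card_le hsub hle, Set.mem_toFinset] at hxT
  exact hxT

theorem Subgroup.mem_of_orderOf_dvd_card_of_le {G : Type*} [Group G] {H K : Subgroup G}
    [Finite K] [IsCyclic K] (hHK : H ≤ K) {x : G} (hx : x ∈ K) (h : orderOf x ∣ Nat.card H) :
    x ∈ H := by
  have hcard : Nat.card (H.subgroupOf K) = Nat.card H :=
    Nat.card_congr (subgroupOfEquivOfLe hHK).toEquiv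
  exact mem_subgroupOf.mp <| IsCyclic.mem_of_orderOf_dvd_card _ (x := ⟨x, hx⟩) <| by
    rwa [Subgroup.orderOf_mk, hcard]

theorem mem_zpowers_of_orderOf_dvd {G : Type*} [Group G] {K : Subgroup G} [Finite K]
    [IsCyclic K] {x y : G} (hx : x ∈ K) (hy : y ∈ K) (h : orderOf x ∣ orderOf y) :
    x ∈ zpowers y :=
  mem_of_orderOf_dvd_card_of_le (zpowers_le_of_mem hy) hx (by rwa [Nat.card_zpowers])

theorem mem_zpowers_of_unique_sylow {G : Type*} [Group G] [Finite G] {q : ℕ} [Fact q.Prime]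
    (huniq : ∀ Q Q' : Sylow q G, Q = Q') {x y : G} (hx : IsPGroup q (zpowers x))
    (hy : orderOf y = q ^ (Nat.card G).factorization q) : x ∈ zpowers y := by
  obtain ⟨Q, hQ⟩ := hx.exists_le_sylow
  rw [huniq Q (Sylow.ofCard (zpowers y) (by rwa [Nat.card_zpowers]))] at hQ
  exact hQ (mem_zpowers x)

theorem powerGraph_not_adj_of_not_dvd {G : Type*} [Group G] {x y : G}
    (hxy : ¬orderOf x ∣ orderOf y) (hyx : ¬orderOf y ∣ orderOf x) : ¬(powerGraph G).Adj x y :=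
  fun ⟨_, h⟩ => h.elim (hxy ∘ orderOf_dvd_of_mem_zpowers) (hyx ∘ orderOf_dvd_of_mem_zpowers)

def pCore (p : ℕ) (G : Type*) [Group G] : Subgroup G :=
  ⨅ P : Sylow p G, (P : Subgroup G)

section PCore

variable {G : Type*} [Group G] {p : ℕ}

theorem pCore_le (P : Sylow p G) : pCore p G ≤ P :=
  iInf_le _ P

theorem isPGroup_pCore : IsPGroup p (pCore p G) :=
  (default : Sylow p G).isPGroup'.to_le (pCore_le _)

variable [Finite G] [hp : Fact p.Prime]

theorem not_isCyclic_of_card_pCore_lt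
    (h : Nat.card (pCore p G) < p ^ (Nat.card G).factorization p) : ¬IsCyclic G := by
  intro _
  let P : Sylow p G := default
  have := Sylow.unique_of_normal P inferInstance
  have hP : pCore p G = P :=
    le_antisymm (pCore_le P) (le_iInf fun P' => (Subsingleton.elim P P').le)
  rw [hP, Sylow.card_eq_multiplicity] at h
  exact lt_irrefl _ h

theorem mem_pCore_of_orderOf_dvd (hcyc : ∀ P : Sylow p G, IsCyclic P) {x : G}
    (hx : orderOf x ∣ Nat.card (pCore p G)) : x ∈ pCore p G := by
  obtain ⟨k, hk⟩ := IsPGroup.iff_card.mp (isPGroup_pCore (p := p) (G := G))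
  obtain ⟨i, -, hi⟩ := (Nat.dvd_prime_pow hp.out).mp (hk ▸ hx)
  obtain ⟨P, hP⟩ :=
    (IsPGroup.of_card (G := zpowers x) (by rwa [Nat.card_zpowers])).exists_le_sylow
  have := hcyc P
  exact mem_of_orderOf_dvd_card_of_le (pCore_le P) (hP (mem_zpowers x)) hx

theorem mem_zpowers_of_mem_pCore (hcyc : ∀ P : Sylow p G, IsCyclic P) {x y : G}
    (hy : y ∈ pCore p G) (h : orderOf x ∣ orderOf y) : x ∈ zpowers y := by
  have := hcyc default
  have := isCyclic_of_le (pCore_le (default : Sylow p G))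
  exact mem_zpowers_of_orderOf_dvd
    (mem_pCore_of_orderOf_dvd hcyc (h.trans ((pCore p G).orderOf_dvd_natCard hy))) hy h

theorem isClique_pCore (hcyc : ∀ P : Sylow p G, IsCyclic P) :
    (powerGraph G).IsClique (pCore p G : Set G) := by
  intro x hx y hy hxy
  obtain ⟨k, hk⟩ := IsPGroup.iff_card.mp (isPGroup_pCore (p := p) (G := G))
  have hdvd {z : G} (hz : z ∈ pCore p G) : orderOf z ∣ p ^ k :=
    hk ▸ (pCore p G).orderOf_dvd_natCard hz
  exact ⟨hxy, (Nat.dvd_or_dvd_of_dvd_prime_pow hp.out (hdvd hx) (hdvd hy)).imp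
    (mem_zpowers_of_mem_pCore hcyc hy) (mem_zpowers_of_mem_pCore hcyc hx)⟩

theorem mem_zpowers_of_orderOf_eq_mul {q : ℕ} [Fact q.Prime] (hcyc : ∀ P : Sylow p G, IsCyclic P)
    (huniq : ∀ Q Q' : Sylow q G, Q = Q') (hGq : (Nat.card G).factorization q = 1) {x y : G}
    {s t : ℕ} (hx : orderOf x = q * s) (hy : orderOf y = q * t) (hqs : q.Coprime s)
    (ht : t ∣ Nat.card (pCore p G)) (hst : s ∣ t) : x ∈ zpowers y := by
  have hyq : y ^ q ∈ pCore p G :=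
    mem_pCore_of_orderOf_dvd hcyc (by rwa [orderOf_pow_of_orderOf_eq_mul hy])
  have hxq : x ^ q ∈ zpowers y := zpowers_le_of_mem (pow_mem (mem_zpowers y) q) <|
    mem_zpowers_of_mem_pCore hcyc hyq <| by
      rwa [orderOf_pow_of_orderOf_eq_mul hx, orderOf_pow_of_orderOf_eq_mul hy]
  rw [mul_comm] at hx hy
  have hxs : x ^ s ∈ zpowers y := zpowers_le_of_mem (pow_mem (mem_zpowers y) t) <|
    mem_zpowers_of_unique_sylow huniq
      (IsPGroup.of_card (n := 1) (by rw [Nat.card_zpowers, orderOf_pow_of_orderOf_eq_mul hx,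
        pow_one]))
      (by rw [orderOf_pow_of_orderOf_eq_mul hy, hGq, pow_one])
  exact mem_of_pow_mem_of_pow_mem hqs hxq hxs

end PCore

section PrimePowMulPrime

variable {G : Type*} [Group G] [Finite G] {p q n : ℕ} [hp : Fact p.Prime] [hq : Fact q.Prime]

theorem exists_sylow_eq_zpowers_of_notMem_pCore (hG : Nat.card G = p ^ n * q) (hpq : p ≠ q)
    (hcyc : ∀ P : Sylow p G, IsCyclic P) (hN : Nat.card (pCore p G) = p ^ (n - 1)) {x : G}
    (hx : x ∉ pCore p G) (hqx : ¬q ∣ orderOf x) :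
    ∃ P : Sylow p G, (P : Subgroup G) = zpowers x := by
  have hqx' : (orderOf x).Coprime q := ((Nat.Prime.coprime_iff_not_dvd hq.out).mpr hqx).symm
  have hdvd : orderOf x ∣ p ^ n := hqx'.dvd_of_dvd_mul_right (hG ▸ orderOf_dvd_natCard x)
  have hord : orderOf x = p ^ (Nat.card G).factorization p := by
    rw [hG, (Nat.factorization_pow_mul_prime hp.out hq.out hpq n).1]
    by_contra hne
    exact hx (mem_pCore_of_orderOf_dvd hcyc (hN ▸ Nat.dvd_prime_pow_pred_of_ne hp.out hdvd hne))
  exact ⟨Sylow.ofCard (zpowers x) (by rwa [Nat.card_zpowers]), rfl⟩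

theorem exists_orderOf_eq_mul (hG : Nat.card G = p ^ n * q) (hpq : p ≠ q) (hn : 0 < n)
    (hN : Nat.card (pCore p G) = p ^ (n - 1)) {x : G} (hqx : q ∣ orderOf x) :
    ∃ s, orderOf x = q * s ∧ s ∣ p ^ (n - 1) := by
  obtain ⟨s, hs⟩ := hqx
  refine ⟨s, hs, Nat.dvd_prime_pow_pred_of_ne hp.out ?_ ?_⟩
  · rw [← Nat.mul_dvd_mul_iff_left hq.out.pos, ← hs, mul_comm, ← hG]
    exact orderOf_dvd_natCard x
  · rintro rfl
    refine not_isCyclic_of_card_pCore_lt (p := p) ?_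
      (isCyclic_of_orderOf_eq_card x (by rw [hs, hG, mul_comm]))
    rw [hN, hG, (Nat.factorization_pow_mul_prime hp.out hq.out hpq n).1]
    exact Nat.pow_lt_pow_right hp.out.one_lt (by omega)

theorem card_sylow_lt_card_pCore (hG : Nat.card G = p ^ n * q) (hpq : p ≠ q)
    (hineq : q < p ^ (n - 1)) (hN : Nat.card (pCore p G) = p ^ (n - 1)) :
    Nat.card (Sylow p G) < Nat.card (pCore p G) := by
  let P : Sylow p G := default
  have hindex : (P : Subgroup G).index = q := by
    have := (P : Subgroup G).card_mul_index
    rw [P.card_eq_multiplicity, hG, (Nat.factorization_pow_mul_prime hp.out hq.out hpq n).1] at this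
    exact Nat.eq_of_mul_eq_mul_left (pow_pos hp.out.pos n) this
  calc Nat.card (Sylow p G) ≤ q := Nat.le_of_dvd hq.out.pos (hindex ▸ P.card_dvd_index)
    _ < Nat.card (pCore p G) := hN ▸ hineq

theorem isClique_setOf_dvd_orderOf (hG : Nat.card G = p ^ n * q) (hpq : p ≠ q) (hn : 0 < n)
    (hcyc : ∀ P : Sylow p G, IsCyclic P) (huniq : ∀ Q Q' : Sylow q G, Q = Q')
    (hN : Nat.card (pCore p G) = p ^ (n - 1)) : (powerGraph G).IsClique {x | q ∣ orderOf x} := by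
  have hGq : (Nat.card G).factorization q = 1 :=
    hG ▸ (Nat.factorization_pow_mul_prime hp.out hq.out hpq n).2
  have hcop {s : ℕ} (hs : s ∣ p ^ (n - 1)) : q.Coprime s :=
    (Nat.Coprime.pow_right _ ((Nat.coprime_primes hq.out hp.out).mpr hpq.symm)).coprime_dvd_right hs
  intro x hx y hy hxy
  obtain ⟨s, hxs, hs⟩ := exists_orderOf_eq_mul hG hpq hn hN hx
  obtain ⟨t, hyt, ht⟩ := exists_orderOf_eq_mul hG hpq hn hN hy
  refine ⟨hxy, (Nat.dvd_or_dvd_of_dvd_prime_pow hp.out hs ht).imp (fun hst => ?_) (fun hts => ?_)⟩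
  · exact mem_zpowers_of_orderOf_eq_mul hcyc huniq hGq hxs hyt (hcop hs) (hN ▸ ht) hst
  · exact mem_zpowers_of_orderOf_eq_mul hcyc huniq hGq hyt hxs (hcop ht) (hN ▸ hs) hts

theorem exists_isRainbowColoring_powerGraph (hG : Nat.card G = p ^ n * q) (hpq : p ≠ q)
    (hn : 0 < n) (hineq : q < p ^ (n - 1)) (hcyc : ∀ P : Sylow p G, IsCyclic P)
    (huniq : ∀ Q Q' : Sylow q G, Q = Q') (hN : Nat.card (pCore p G) = p ^ (n - 1)) :
    ∃ ζ : Sym2 G → Fin 2, IsRainbowColoring (powerGraph G) ζ := by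
  have hNS : Disjoint (pCore p G : Set G) {x | q ∣ orderOf x} := by
    refine Set.disjoint_left.mpr fun x hx hqx => hpq ?_
    have hqp : q ∣ p ^ (n - 1) := hN ▸ hqx.trans ((pCore p G).orderOf_dvd_natCard hx)
    exact ((Nat.prime_dvd_prime_iff_eq hq.out hp.out).mp (hq.out.dvd_of_dvd_pow hqp)).symm
  have hsyl (v : G) :
      ∃ P : Sylow p G, v ∉ pCore p G → ¬q ∣ orderOf v → (P : Subgroup G) = zpowers v := by
    by_cases h : v ∉ pCore p G ∧ ¬q ∣ orderOf v
    · obtain ⟨P, hP⟩ := exists_sylow_eq_zpowers_of_notMem_pCore hG hpq hcyc hN h.1 h.2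
      exact ⟨P, fun _ _ => hP⟩
    · exact ⟨default, fun h1 h2 => absurd ⟨h1, h2⟩ h⟩
  choose P hP using hsyl
  obtain ⟨e⟩ := nonempty_embedding_ne_of_natCard_lt (card_sylow_lt_card_pCore hG hpq hineq hN) 1
  refine ⟨_, isRainbowColoring_hubColoring (Γ := powerGraph G) (o := 1)
    (W := fun v => (e (P v) : G)) (fun v hv => ⟨hv.symm, Or.inl (one_mem _)⟩) (one_mem _)
    (isClique_pCore hcyc) (isClique_setOf_dvd_orderOf hG hpq hn hcyc huniq hN) hNS ?_
    (fun v => (e (P v)).1.2) (fun v h => (e (P v)).2 (Subtype.ext h)) ?_⟩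
  · intro x hx v hvN hvS
    exact ⟨ne_of_mem_of_not_mem hx hvN, Or.inl (hP v hvN hvS ▸ pCore_le _ hx)⟩
  · intro u v huN huS hvN hvS huv hadj hW
    refine hadj ⟨huv, Or.inl ?_⟩
    rw [← hP v hvN hvS, ← e.injective (Subtype.ext (Subtype.ext hW)), hP u huN huS]
    exact mem_zpowers u

end PrimePowMulPrime

theorem rc_powerGraph_eq_two_of_pnq
    (p q n : ℕ) (hp : p.Prime) (hq : q.Prime) (hpq : p < q) (hn : 0 < n)
    (hineq : q ≤ p ^ (n - 1))
    (G : Type*) [Group G] [Fintype G]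
    (hcard : Fintype.card G = p ^ n * q)
    (hcyc : ∀ P : Sylow p G, IsCyclic P)
    (huniq : ∀ Q Q' : Sylow q G, Q = Q')
    (hint : Nat.card ↥(⨅ P : Sylow p G, (P : Subgroup G)) = p ^ (n - 1)) :
    rainbowConnection (powerGraph G) = 2 := by
  have := Fact.mk hp
  have := Fact.mk hq
  have hG : Nat.card G = p ^ n * q := by rw [Nat.card_eq_fintype_card, hcard]
  have hineq' : q < p ^ (n - 1) := hineq.lt_of_ne fun h => hpq.ne (hq.pow_eq_iff.mp h.symm).1
  obtain ⟨ζ, hζ⟩ := exists_isRainbowColoring_powerGraph hG hpq.ne hn hineq' hcyc huniq hint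
  obtain ⟨x, hx⟩ := exists_prime_orderOf_dvd_card' (G := G) p
    (hG ▸ dvd_mul_of_dvd_left (dvd_pow_self p hn.ne') q)
  obtain ⟨y, hy⟩ := exists_prime_orderOf_dvd_card' (G := G) q (hG ▸ dvd_mul_left q _)
  refine rainbowConnection_eq_two hζ (x := x) (y := y) ?_ (powerGraph_not_adj_of_not_dvd ?_ ?_)
  · exact ne_of_apply_ne orderOf (by rw [hx, hy]; exact hpq.ne)
  · rw [hx, hy]; exact (Nat.prime_dvd_prime_iff_eq hp hq).not.mpr hpq.ne
  · rw [hx, hy]; exact (Nat.prime_dvd_prime_iff_eq hq hp).not.mpr hpq.ne'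
end

section
/- Let G be a finite noncyclic group with no maximal involutions. If there exists a prime p dividing |G| such that G has more than one subgroup of order p, then the rainbow connection number of the power graph Γ_G equals 3. -/
/-!
The identity is adjacent to every other vertex of the power graph, so a rainbow colouring with
three colours is obtained by giving all remaining edges the third colour and the edges at the
identity two colours taken from a 2-colouring of a spanning forest of the power graph without the
identity: since there is no maximal involution, every `u ≠ 1` has a neighbour `w ≠ 1` of the
other colour, and `u - w - 1 - v` is then rainbow.

Conversely, two distinct subgroups `⟨x⟩, ⟨y⟩` of prime order `p` meet trivially and cannot both lie
in one cyclic subgroup, so `x` and `y` are non-adjacent and `1` is their only common neighbour.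
A second subgroup of order `p` forces a third one, and the three edges from `1` to their
generators need three different colours.
-/

namespace SimpleGraph

variable {V : Type*} (Γ : SimpleGraph V)

theorem exists_fin_two_forall_adj_exists_adj_ne :
    ∃ c : V → Fin 2, ∀ v w, Γ.Adj v w → ∃ u, Γ.Adj v u ∧ c u ≠ c v := by
  obtain ⟨F, hFΓ, hF, hreach⟩ := Γ.exists_isAcyclic_reachable_eq_le
  refine ⟨hF.coloringTwo, fun v w hvw => ?_⟩
  obtain ⟨p⟩ : F.Reachable v w := hreach ▸ hvw.reachable
  cases p with
  | nil => exact absurd rfl hvw.ne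
  | cons hvu _ => exact ⟨_, hFΓ hvu, (hF.coloringTwo.valid hvu).symm⟩

open scoped Classical in
noncomputable def centerColoring (o : V) (c : V → Fin 2) : Sym2 V → Fin 3 :=
  Sym2.lift ⟨fun a b => if a = o then (c b).castSucc else if b = o then (c a).castSucc
    else 2, fun a b => by by_cases ha : a = o <;> by_cases hb : b = o <;> simp [ha, hb]⟩

lemma centerColoring_mk_left (o : V) (c : V → Fin 2) (v : V) :
    centerColoring o c s(o, v) = (c v).castSucc := by
  simp [centerColoring]

lemma centerColoring_mk_right (o : V) (c : V → Fin 2) {v : V} (hv : v ≠ o) :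
    centerColoring o c s(v, o) = (c v).castSucc := by
  simp [centerColoring, hv]

lemma centerColoring_mk_of_ne (o : V) (c : V → Fin 2) {v w : V} (hv : v ≠ o) (hw : w ≠ o) :
    centerColoring o c s(v, w) = 2 := by
  simp [centerColoring, hv, hw]

/-- A non-adjacent pair `u, v` is joined through `o` when `c u ≠ c v`, and otherwise through
`u - w - o - v` for a neighbour `w ≠ o` of `u` with `c w ≠ c u`. -/
theorem isRainbowColoring_centerColoring {o : V} (hdom : ∀ v ≠ o, Γ.Adj o v) {c : V → Fin 2}
    (hc : ∀ v ≠ o, ∃ w ≠ o, Γ.Adj v w ∧ c w ≠ c v) :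
    IsRainbowColoring Γ (centerColoring o c) := by
  intro u v
  by_cases huv : u = v
  · subst huv
    exact ⟨.nil, .nil, List.nodup_nil⟩
  by_cases hadj : Γ.Adj u v
  · exact ⟨hadj.toWalk, by simp [huv], by simp⟩
  have hu : u ≠ o := by rintro rfl; exact hadj (hdom v (Ne.symm huv))
  have hv : v ≠ o := by rintro rfl; exact hadj (hdom u huv).symm
  have hCu := centerColoring_mk_right o c hu
  have hCv := centerColoring_mk_left o c v
  by_cases hcuv : c u = c v
  · obtain ⟨w, hw, huw, hcw⟩ := hc u hu
    have hwv : w ≠ v := by rintro rfl; exact hadj huw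
    refine ⟨.cons huw (.cons (hdom w hw).symm (.cons (hdom v hv) .nil)), ?_, ?_⟩
    · simp [huv, hu, huw.ne, hw, hwv, hv.symm]
    · have hlast : ∀ i : Fin 2, i.castSucc ≠ 2 := by decide
      simp [centerColoring_mk_of_ne o c hu hw, centerColoring_mk_right o c hw, hCv,
        (hlast _).symm, hcuv ▸ hcw]
  · refine ⟨.cons (hdom u hu).symm (.cons (hdom v hv) .nil), ?_, ?_⟩
    · simp [huv, hu, hv.symm]
    · simp [hCu, hCv, hcuv]

theorem exists_isRainbowColoring_fin_three (o : V) (hdom : ∀ v ≠ o, Γ.Adj o v)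
    (hnbr : ∀ v ≠ o, ∃ w ≠ o, Γ.Adj v w) : ∃ ζ : Sym2 V → Fin 3, IsRainbowColoring Γ ζ := by
  obtain ⟨c, hc⟩ := (Γ.deleteIncidenceSet o).exists_fin_two_forall_adj_exists_adj_ne
  refine ⟨centerColoring o c, isRainbowColoring_centerColoring Γ hdom fun v hv => ?_⟩
  obtain ⟨w, hw, hvw⟩ := hnbr v hv
  obtain ⟨u, hvu, hcu⟩ := hc v w (deleteIncidenceSet_adj.mpr ⟨hvw, hv, hw⟩)
  obtain ⟨hvu, -, hu⟩ := deleteIncidenceSet_adj.mp hvu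
  exact ⟨u, hu, hvu, hcu⟩

def IsSoleMidpoint (o a b : V) : Prop :=
  a ≠ b ∧ ¬ Γ.Adj a b ∧ ∀ w, Γ.Adj a w → Γ.Adj w b → w = o

end SimpleGraph

section RainbowLowerBound

variable {V : Type*} {Γ : SimpleGraph V} {k : ℕ} {ζ : Sym2 V → Fin k}

/-- With fewer than three colours a rainbow path has length at most two, so it must be
`a - o - b`. -/
theorem IsRainbowColoring.apply_ne_of_isSoleMidpoint (hζ : IsRainbowColoring Γ ζ) (hk : k < 3)
    {o a b : V} (h : Γ.IsSoleMidpoint o a b) : ζ s(o, a) ≠ ζ s(o, b) := by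
  obtain ⟨hab, hnadj, hmid⟩ := h
  obtain ⟨p, -, hp⟩ := hζ a b
  have hlen : p.length ≤ 2 := by
    have := hp.length_le_card
    simp only [List.length_map, SimpleGraph.Walk.length_edges, Fintype.card_fin] at this
    omega
  match p, hlen, hp with
  | .nil, _, _ => exact absurd rfl hab
  | .cons had .nil, _, _ => exact absurd had hnadj
  | .cons haw (.cons hwb .nil), _, hp =>
    obtain rfl := hmid _ haw hwb
    simpa [Sym2.eq_swap] using hp
  | .cons _ (.cons _ (.cons _ _)), hlen, _ => simp at hlen

theorem IsRainbowColoring.three_le (hζ : IsRainbowColoring Γ ζ) {o x y z : V}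
    (hxy : Γ.IsSoleMidpoint o x y) (hyz : Γ.IsSoleMidpoint o y z)
    (hxz : Γ.IsSoleMidpoint o x z) : 3 ≤ k := by
  by_contra! hk
  have hnodup : [ζ s(o, x), ζ s(o, y), ζ s(o, z)].Nodup := by
    simp [hζ.apply_ne_of_isSoleMidpoint hk hxy, hζ.apply_ne_of_isSoleMidpoint hk hyz,
      hζ.apply_ne_of_isSoleMidpoint hk hxz]
  have := hnodup.length_le_card
  simp only [List.length_cons, List.length_nil, Fintype.card_fin] at this
  omega

end RainbowLowerBound

theorem rainbowConnection_eq {V : Type*} {Γ : SimpleGraph V} {n : ℕ}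
    (hex : ∃ ζ : Sym2 V → Fin n, IsRainbowColoring Γ ζ)
    (hmin : ∀ k (ζ : Sym2 V → Fin k), IsRainbowColoring Γ ζ → n ≤ k) :
    rainbowConnection Γ = n :=
  IsLeast.csInf_eq ⟨hex, fun _ ⟨ζ, hζ⟩ => hmin _ ζ hζ⟩

open Subgroup

section PrimeOrder

variable {G : Type*} [Group G] {p : ℕ} {w x y : G}

theorem zpowers_eq_of_mem_zpowers (hx : (orderOf x).Prime) (hy : y ∈ zpowers x) (hy1 : y ≠ 1) :
    zpowers y = zpowers x := by
  have : Finite (zpowers x) :=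
    Nat.finite_of_card_ne_zero (by rw [Nat.card_zpowers]; exact hx.ne_zero)
  have hyx : orderOf y = orderOf x :=
    (hx.eq_one_or_self_of_dvd _ (orderOf_dvd_of_mem_zpowers hy)).resolve_left
      (mt orderOf_eq_one_iff.mp hy1)
  exact eq_of_le_of_card_ge (zpowers_le.mpr hy) (by rw [Nat.card_zpowers, Nat.card_zpowers, hyx])

theorem disjoint_zpowers_of_prime (hx : (orderOf x).Prime) (hy : (orderOf y).Prime)
    (hxy : zpowers x ≠ zpowers y) : Disjoint (zpowers x) (zpowers y) :=
  disjoint_def.mpr fun {u} hux huy => by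
    by_contra hu
    exact hxy ((zpowers_eq_of_mem_zpowers hx hux hu).symm.trans
      (zpowers_eq_of_mem_zpowers hy huy hu))

theorem notMem_zpowers_of_prime (hx : (orderOf x).Prime) (hy : (orderOf y).Prime)
    (hxy : zpowers x ≠ zpowers y) : y ∉ zpowers x := fun h =>
  hy.ne_one (orderOf_eq_one_iff.mpr
    (disjoint_def.mp (disjoint_zpowers_of_prime hx hy hxy) h (mem_zpowers y)))

theorem mem_zpowers_pow_of_pow_eq_one {m : ℕ} (hw : orderOf w = p * m) (hp : p ≠ 0)
    (hx : x ∈ zpowers w) (hxp : x ^ p = 1) : x ∈ zpowers (w ^ m) := by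
  obtain ⟨k, rfl⟩ := mem_zpowers_iff.mp hx
  have hdvd : (p : ℤ) * m ∣ p * k := by
    rw [← Nat.cast_mul, ← hw, orderOf_dvd_iff_zpow_eq_one, mul_comm, zpow_mul, zpow_natCast,
      hxp]
  obtain ⟨j, rfl⟩ := Int.dvd_of_mul_dvd_mul_left (Int.natCast_ne_zero.mpr hp) hdvd
  exact ⟨j, by simp only [← zpow_natCast, ← zpow_mul]⟩

/-- Both subgroups are generated by `w ^ (orderOf w / p)`. -/
theorem zpowers_eq_zpowers_of_mem_zpowers (hp : p.Prime) (hx : orderOf x = p)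
    (hy : orderOf y = p) (hxw : x ∈ zpowers w) (hyw : y ∈ zpowers w) :
    zpowers x = zpowers y := by
  obtain ⟨m, hm⟩ : p ∣ orderOf w := hx ▸ orderOf_dvd_of_mem_zpowers hxw
  have hx1 : x ≠ 1 := fun h => hp.ne_one (by rw [← hx, h, orderOf_one])
  have hy1 : y ≠ 1 := fun h => hp.ne_one (by rw [← hy, h, orderOf_one])
  have hxm := mem_zpowers_pow_of_pow_eq_one hm hp.ne_zero hxw (hx ▸ pow_orderOf_eq_one x)
  have hym := mem_zpowers_pow_of_pow_eq_one hm hp.ne_zero hyw (hy ▸ pow_orderOf_eq_one y)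
  have hm0 : m ≠ 0 := by
    rintro rfl
    rw [pow_zero, zpowers_one_eq_bot, mem_bot] at hxm
    exact hx1 hxm
  have hwm : (orderOf (w ^ m)).Prime := by
    rwa [orderOf_pow_of_dvd hm0 (Dvd.intro_left p hm.symm), hm,
      Nat.mul_div_cancel _ (Nat.pos_of_ne_zero hm0)]
  rw [zpowers_eq_of_mem_zpowers hwm hxm hx1, zpowers_eq_of_mem_zpowers hwm hym hy1]

end PrimeOrder

section ThirdSubgroup

variable {G : Type*} [Group G] {p : ℕ} {x y : G}

theorem exists_conj_zpowers_ne (hp : p.Prime) (hx : orderOf x = p) (hy : orderOf y = p)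
    (hxy : zpowers x ≠ zpowers y) (hconj : y * x * y⁻¹ ∉ zpowers x) :
    ∃ z, orderOf z = p ∧ zpowers z ≠ zpowers x ∧ zpowers z ≠ zpowers y := by
  have hz : orderOf (y * x * y⁻¹) = p := (SemiconjBy.conj_mk y x).orderOf_eq.symm.trans hx
  refine ⟨y * x * y⁻¹, hz, fun h => hconj (h ▸ mem_zpowers _), fun h => ?_⟩
  have hxy' : x ∈ zpowers y := (mul_mem_cancel_left (mem_zpowers y)).mp
    ((mul_mem_cancel_right (inv_mem (mem_zpowers y))).mp (h ▸ mem_zpowers _))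
  exact notMem_zpowers_of_prime (hy ▸ hp) (hx ▸ hp) hxy.symm hxy'

theorem exists_mul_zpowers_ne (hp : p.Prime) (hx : orderOf x = p) (hy : orderOf y = p)
    (hxy : zpowers x ≠ zpowers y) (hcomm : Commute x y) :
    ∃ z, orderOf z = p ∧ zpowers z ≠ zpowers x ∧ zpowers z ≠ zpowers y := by
  have : Fact p.Prime := ⟨hp⟩
  have hy_nmem := notMem_zpowers_of_prime (hx ▸ hp) (hy ▸ hp) hxy
  have hx_nmem := notMem_zpowers_of_prime (hy ▸ hp) (hx ▸ hp) hxy.symm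
  refine ⟨x * y, orderOf_eq_prime ?_ ?_, fun h => hy_nmem ?_, fun h => hx_nmem ?_⟩
  · rw [hcomm.mul_pow, ← hx, pow_orderOf_eq_one, one_mul, hx, ← hy, pow_orderOf_eq_one]
  · intro h
    exact hy_nmem (eq_inv_of_mul_eq_one_right h ▸ inv_mem (mem_zpowers x))
  · exact (mul_mem_cancel_left (mem_zpowers x)).mp (h ▸ mem_zpowers (x * y))
  · exact (mul_mem_cancel_right (mem_zpowers y)).mp (h ▸ mem_zpowers (x * y))

/-- Either conjugation moves one of `⟨x⟩, ⟨y⟩` to a third subgroup of order `p`, or `x` and `y`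
normalize each other's subgroups; then their commutator lies in `⟨x⟩ ∩ ⟨y⟩ = 1`, and `⟨x * y⟩`
is a third subgroup. -/
theorem exists_orderOf_eq_zpowers_ne (hp : p.Prime) (hx : orderOf x = p) (hy : orderOf y = p)
    (hxy : zpowers x ≠ zpowers y) :
    ∃ z, orderOf z = p ∧ zpowers z ≠ zpowers x ∧ zpowers z ≠ zpowers y := by
  by_cases hyx : y * x * y⁻¹ ∉ zpowers x
  · exact exists_conj_zpowers_ne hp hx hy hxy hyx
  by_cases hxy' : x * y * x⁻¹ ∉ zpowers y
  · obtain ⟨z, hz, hzy, hzx⟩ := exists_conj_zpowers_ne hp hy hx hxy.symm hxy'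
    exact ⟨z, hz, hzx, hzy⟩
  rw [not_not] at hyx hxy'
  have hcomm : x * y * x⁻¹ * y⁻¹ = 1 := by
    refine disjoint_def.mp (disjoint_zpowers_of_prime (hx ▸ hp) (hy ▸ hp) hxy) ?_
      (mul_mem hxy' (inv_mem (mem_zpowers y)))
    simpa [mul_assoc] using mul_mem (mem_zpowers x) (inv_mem hyx)
  exact exists_mul_zpowers_ne hp hx hy hxy (commutatorElement_eq_one_iff_commute.mp hcomm)

end ThirdSubgroup

section PowerGraph

variable {G : Type*} [Group G]

theorem powerGraph_adj_one {v : G} (hv : v ≠ 1) : (powerGraph G).Adj 1 v :=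
  ⟨hv.symm, Or.inl (one_mem _)⟩

theorem exists_powerGraph_adj_ne_one (hno : ∀ x : G, ¬ IsMaximalInvolution x) {u : G}
    (hu : u ≠ 1) : ∃ w ≠ 1, (powerGraph G).Adj u w := by
  by_cases h2 : orderOf u = 2
  · obtain ⟨g, hug, hgu⟩ : ∃ g, u ∈ zpowers g ∧ zpowers g ≠ zpowers u := by
      simpa [IsMaximalInvolution, h2] using hno u
    refine ⟨g, ?_, ?_, Or.inl hug⟩
    · rintro rfl
      exact hu (by simpa using hug)
    · rintro rfl
      exact hgu rfl
  · have hsq : u ^ 2 ≠ 1 := fun h => by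
      rcases (Nat.dvd_prime Nat.prime_two).mp (orderOf_dvd_of_pow_eq_one h) with h1 | h1
      · exact hu (orderOf_eq_one_iff.mp h1)
      · exact h2 h1
    refine ⟨u ^ 2, hsq, fun h => hu ?_, Or.inr (npow_mem_zpowers u 2)⟩
    simpa [pow_two] using h.symm

theorem powerGraph_isSoleMidpoint {p : ℕ} (hp : p.Prime) {x y : G} (hx : orderOf x = p)
    (hy : orderOf y = p) (hxy : zpowers x ≠ zpowers y) :
    (powerGraph G).IsSoleMidpoint 1 x y := by
  have hx_nmem := notMem_zpowers_of_prime (hy ▸ hp) (hx ▸ hp) hxy.symm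
  have hy_nmem := notMem_zpowers_of_prime (hx ▸ hp) (hy ▸ hp) hxy
  refine ⟨fun h => hxy (h ▸ rfl), fun ⟨_, h⟩ => h.elim hx_nmem hy_nmem, fun w hxw hwy => ?_⟩
  rcases hxw.2, hwy.2 with ⟨hxw | hwx, hwy | hyw⟩
  · exact absurd (zpowers_le.mpr hwy hxw) hx_nmem
  · exact absurd (zpowers_eq_zpowers_of_mem_zpowers hp hx hy hxw hyw) hxy
  · exact disjoint_def.mp (disjoint_zpowers_of_prime (hx ▸ hp) (hy ▸ hp) hxy) hwx hwy
  · exact absurd (zpowers_le.mpr hwx hyw) hy_nmem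

end PowerGraph

theorem exists_orderOf_eq_zpowers_eq_of_card_eq_prime {G : Type*} [Group G] {p : ℕ}
    (hp : p.Prime) {H : Subgroup G} (hH : Nat.card H = p) :
    ∃ x, orderOf x = p ∧ zpowers x = H := by
  have : Fact p.Prime := ⟨hp⟩
  obtain ⟨x, hx⟩ := H.isCyclic_iff_exists_zpowers_eq_top.mp (isCyclic_of_prime_card hH)
  exact ⟨x, by rw [← Nat.card_zpowers, hx, hH], hx⟩

theorem rc_powerGraph_eq_three_of_nonunique_prime_subgroup_general
    (G : Type*) [Group G] [Fintype G]
    (hno : ∀ x : G, ¬ IsMaximalInvolution x)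
    (h : ∃ p : ℕ, p.Prime ∧ p ∣ Fintype.card G ∧
      ∃ H K : Subgroup G, H ≠ K ∧ Nat.card H = p ∧ Nat.card K = p) :
    rainbowConnection (powerGraph G) = 3 := by
  obtain ⟨p, hp, -, H, K, hHK, hH, hK⟩ := h
  obtain ⟨x, hx, rfl⟩ := exists_orderOf_eq_zpowers_eq_of_card_eq_prime hp hH
  obtain ⟨y, hy, rfl⟩ := exists_orderOf_eq_zpowers_eq_of_card_eq_prime hp hK
  obtain ⟨z, hz, hzx, hzy⟩ := exists_orderOf_eq_zpowers_ne hp hx hy hHK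
  refine rainbowConnection_eq ?_ fun k ζ hζ => hζ.three_le (o := 1)
    (powerGraph_isSoleMidpoint hp hx hy hHK) (powerGraph_isSoleMidpoint hp hy hz hzy.symm)
    (powerGraph_isSoleMidpoint hp hx hz hzx.symm)
  exact (powerGraph G).exists_isRainbowColoring_fin_three 1 (fun _ => powerGraph_adj_one)
    (fun _ => exists_powerGraph_adj_ne_one hno)

theorem rc_powerGraph_eq_three_of_nonunique_prime_subgroup
    (G : Type*) [Group G] [Fintype G] (hnc : ¬ IsCyclic G)
    (hno : ∀ x : G, ¬ IsMaximalInvolution x)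
    (h : ∃ p : ℕ, p.Prime ∧ p ∣ Fintype.card G ∧
      ∃ H K : Subgroup G, H ≠ K ∧ Nat.card H = p ∧ Nat.card K = p) :
    rainbowConnection (powerGraph G) = 3 :=
  rc_powerGraph_eq_three_of_nonunique_prime_subgroup_general G hno h
end
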